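/- arXiv:1701.00182 — 6 statements merged into one kernel-verified Lean document; each statement's English description precedes it below -/
import Mathlib

section
/- The Schur complement of the even-indexed blocks in a red/black permuted block tridiagonal matrix is again block tridiagonal. Precisely: let A be a block tridiagonal matrix with n = 2m blocks, with diagonal blocks D_0,...,D_{n-1}, subdiagonal blocks E_1,...,E_{n-1}, and superdiagonal blocks F_0,...,F_{n-2}, where each D_j with j even is invertible. After permuting rows and columns so the even-indexed block rows come first (giving the 2x2 block form [[A11,A12],[A21,A22]] with A11 block diagonal containing the even D_j), the Schur complement A22 - A21 A11^{-1} A12 is block tridiagonal in the odd-indexed blocks, with diagonal blocks D_j - E_j D_{j-1}^{-1} F_{j-1} - F_j D_{j+1}^{-1} E_{j+1}, subdiagonal blocks -E_j D_{j-1}^{-1} E_{j-1}, and superdiagonal blocks -F_j D_{j+1}^{-1} F_{j+1} (for odd j, with the boundary convention that terms involving indices outside 0..n-1 are omitted). -/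
/-!
Read an `(m·s)`-square matrix as an `m × m` matrix over the ring of `s × s` matrices
(`Matrix.comp`). Then `A11` is diagonal, `A21` upper bidiagonal and `A12` lower bidiagonal, and the
product of an upper bidiagonal, a diagonal and a lower bidiagonal matrix is tridiagonal: each entry
of the product is a sum with at most two nonzero terms. At the last block row the second term of
the diagonal entry is missing, which matches the formula because `E (2 * m) = 0`.
-/

open Matrix

namespace Matrix

variable {S : Type*}

/-- The entries are read off `ℕ`-indexed sequences, so that shifted entries such as `d (i + 1)`
make sense without bounds checks. -/
def tridiagonal [Zero S] (m : ℕ) (d l u : ℕ → S) : Matrix (Fin m) (Fin m) S :=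
  of fun i j => if i = j then d i else if (i : ℕ) = j + 1 then l i
    else if (j : ℕ) = i + 1 then u i else 0

theorem upper_bidiagonal_mul_diagonal_mul_apply [NonUnitalNonAssocSemiring S] {m : ℕ}
    (a u d : ℕ → S) (L : Matrix (Fin m) (Fin m) S) (i k : Fin m) :
    (tridiagonal m a 0 u * diagonal (fun j : Fin m => d j) * L) i k =
      a i * d i * L i k +
        if h : (i : ℕ) + 1 < m then u i * d (i + 1) * L ⟨i + 1, h⟩ k else 0 := by
  rw [mul_apply]
  simp only [mul_diagonal, tridiagonal, of_apply, Fin.ext_iff]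
  split_ifs with h
  · rw [Fintype.sum_eq_add i ⟨i + 1, h⟩ (by simp [Fin.ext_iff])]
    · simp [show (i : ℕ) ≠ i + 1 + 1 by omega]
    · intro j hj
      obtain ⟨hji, hji'⟩ : (j : ℕ) ≠ i ∧ (j : ℕ) ≠ i + 1 := by
        simpa [Fin.ext_iff] using hj
      simp [hji.symm, hji']
  · rw [Fintype.sum_eq_single i]
    · simp
    · intro j hj
      have hji : (j : ℕ) ≠ i := by simpa [Fin.ext_iff] using hj
      simp [hji.symm, show (j : ℕ) ≠ i + 1 by omega]

theorem upper_bidiagonal_mul_diagonal_mul_lower_bidiagonal [NonUnitalNonAssocSemiring S]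
    {m : ℕ} (a u d c l : ℕ → S) (hl : l m = 0) :
    tridiagonal m a 0 u * diagonal (fun j : Fin m => d j) * tridiagonal m c l 0 =
      tridiagonal m (fun i => a i * d i * c i + u i * d (i + 1) * l (i + 1))
        (fun i => a i * d i * l i) (fun i => u i * d (i + 1) * c (i + 1)) := by
  ext i k
  rw [upper_bidiagonal_mul_diagonal_mul_apply]
  simp only [tridiagonal, of_apply, Fin.ext_iff]
  split_ifs <;> first | omega | (rw [show (i : ℕ) + 1 = m by omega, hl]; simp) | simp

theorem tridiagonal_sub [AddGroup S] {m : ℕ} (d l u d' l' u' : ℕ → S) :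
    tridiagonal m d l u - tridiagonal m d' l' u' = tridiagonal m (d - d') (l - l') (u - u') := by
  ext i j
  simp only [tridiagonal, sub_apply, of_apply]
  split_ifs <;> simp

theorem tridiagonal_zero_zero [Zero S] {m : ℕ} (d : ℕ → S) :
    tridiagonal m d 0 0 = diagonal fun i : Fin m => d i := by
  ext i j
  simp [tridiagonal, diagonal_apply]

theorem comp_tridiagonal {m s : ℕ} {R : Type*} [Zero R]
    (d l u : ℕ → Matrix (Fin s) (Fin s) R) :
    comp _ _ _ _ R (tridiagonal m d l u) = fun p q =>
      if p.1 = q.1 then d p.1 p.2 q.2 else if (p.1 : ℕ) = q.1 + 1 then l p.1 p.2 q.2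
      else if (q.1 : ℕ) = p.1 + 1 then u p.1 p.2 q.2 else 0 := by
  ext p q
  simp only [comp_apply, tridiagonal, of_apply]
  split_ifs <;> rfl

theorem inv_comp_diagonal {ι J R : Type*} [Fintype ι] [DecidableEq ι] [Fintype J] [DecidableEq J]
    [CommRing R] (d : ι → Matrix J J R) (hd : ∀ i, IsUnit (d i)) :
    (comp ι ι J J R (diagonal d))⁻¹ = comp ι ι J J R (diagonal fun i => (d i)⁻¹) := by
  refine inv_eq_right_inv ?_
  rw [← compRingEquiv_apply, ← compRingEquiv_apply, ← map_mul, diagonal_mul_diagonal]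
  simp [mul_nonsing_inv _ ((isUnit_iff_isUnit_det _).mp (hd _)), comp_one]

end Matrix

theorem schur_complement_of_even_blocks_is_block_tridiagonal_general
    (m s : ℕ) (D E F : ℕ → Matrix (Fin s) (Fin s) ℝ)
    (hEtop : ∀ j, 2 * m ≤ j → E j = 0)
    (hD : ∀ i : Fin m, IsUnit (D (2 * (i : ℕ))))
    (A11 A12 A21 A22 : Matrix (Fin m × Fin s) (Fin m × Fin s) ℝ)
    (hA11 : A11 = fun p q => if p.1 = q.1 then D (2 * (p.1 : ℕ)) p.2 q.2 else 0)
    (hA12 : A12 = fun p q =>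
      if p.1 = q.1 then F (2 * (p.1 : ℕ)) p.2 q.2
      else if (p.1 : ℕ) = (q.1 : ℕ) + 1 then E (2 * (p.1 : ℕ)) p.2 q.2 else 0)
    (hA21 : A21 = fun p q =>
      if p.1 = q.1 then E (2 * (p.1 : ℕ) + 1) p.2 q.2
      else if (q.1 : ℕ) = (p.1 : ℕ) + 1 then F (2 * (p.1 : ℕ) + 1) p.2 q.2 else 0)
    (hA22 : A22 = fun p q => if p.1 = q.1 then D (2 * (p.1 : ℕ) + 1) p.2 q.2 else 0) :
    A22 - A21 * A11⁻¹ * A12 = fun p q =>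
      if p.1 = q.1 then
        (D (2 * (p.1 : ℕ) + 1)
          - E (2 * (p.1 : ℕ) + 1) * (D (2 * (p.1 : ℕ)))⁻¹ * F (2 * (p.1 : ℕ))
          - F (2 * (p.1 : ℕ) + 1) * (D (2 * (p.1 : ℕ) + 2))⁻¹ * E (2 * (p.1 : ℕ) + 2)) p.2 q.2
      else if (p.1 : ℕ) = (q.1 : ℕ) + 1 then
        (-(E (2 * (p.1 : ℕ) + 1) * (D (2 * (p.1 : ℕ)))⁻¹ * E (2 * (p.1 : ℕ)))) p.2 q.2
      else if (q.1 : ℕ) = (p.1 : ℕ) + 1 then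
        (-(F (2 * (p.1 : ℕ) + 1) * (D (2 * (p.1 : ℕ) + 2))⁻¹ * F (2 * (p.1 : ℕ) + 2))) p.2 q.2
      else 0 := by
  have h11 : A11 = comp _ _ _ _ ℝ (tridiagonal m (fun i => D (2 * i)) 0 0) := by
    rw [hA11, comp_tridiagonal]; ext; simp
  have h12 :
      A12 = comp _ _ _ _ ℝ (tridiagonal m (fun i => F (2 * i)) (fun i => E (2 * i)) 0) := by
    rw [hA12, comp_tridiagonal]; ext; simp
  have h21 : A21 =
      comp _ _ _ _ ℝ (tridiagonal m (fun i => E (2 * i + 1)) 0 (fun i => F (2 * i + 1))) := by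
    rw [hA21, comp_tridiagonal]
    ext p q
    split_ifs <;> first | omega | simp
  have h22 : A22 = comp _ _ _ _ ℝ (tridiagonal m (fun i => D (2 * i + 1)) 0 0) := by
    rw [hA22, comp_tridiagonal]; ext; simp
  have hinv : A11⁻¹ = comp _ _ _ _ ℝ (diagonal fun i : Fin m => (D (2 * i))⁻¹) := by
    rw [h11, tridiagonal_zero_zero, inv_comp_diagonal _ hD]
  rw [h22, h21, hinv, h12]
  simp only [← compRingEquiv_apply, ← map_mul, ← map_sub]
  rw [compRingEquiv_apply,
    upper_bidiagonal_mul_diagonal_mul_lower_bidiagonal (m := m) _ _ (fun i => (D (2 * i))⁻¹) _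
      (fun i => E (2 * i)) (hEtop _ le_rfl),
    tridiagonal_sub, comp_tridiagonal]
  ext p q
  simp only [Pi.sub_apply, Pi.zero_apply, zero_sub, sub_add_eq_sub_sub, mul_add, mul_one]

/-- The Schur complement of the even-indexed blocks in a red/black permuted
block tridiagonal matrix is again block tridiagonal, with the cyclic-reduction
block formulas.  Blocks are indexed by naturals; blocks with indices outside
`0..2m-1` are zero, which encodes the boundary convention. -/
theorem schur_complement_of_even_blocks_is_block_tridiagonal
    (m s : ℕ) (D E F : ℕ → Matrix (Fin s) (Fin s) ℝ)
    (hE0 : E 0 = 0) (hEtop : ∀ j, 2 * m ≤ j → E j = 0)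
    (hFtop : ∀ j, 2 * m - 1 ≤ j → F j = 0)
    (hD : ∀ i : Fin m, IsUnit (D (2 * (i : ℕ))))
    (A11 A12 A21 A22 : Matrix (Fin m × Fin s) (Fin m × Fin s) ℝ)
    (hA11 : A11 = fun p q => if p.1 = q.1 then D (2 * (p.1 : ℕ)) p.2 q.2 else 0)
    (hA12 : A12 = fun p q =>
      if p.1 = q.1 then F (2 * (p.1 : ℕ)) p.2 q.2
      else if (p.1 : ℕ) = (q.1 : ℕ) + 1 then E (2 * (p.1 : ℕ)) p.2 q.2 else 0)
    (hA21 : A21 = fun p q =>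
      if p.1 = q.1 then E (2 * (p.1 : ℕ) + 1) p.2 q.2
      else if (q.1 : ℕ) = (p.1 : ℕ) + 1 then F (2 * (p.1 : ℕ) + 1) p.2 q.2 else 0)
    (hA22 : A22 = fun p q => if p.1 = q.1 then D (2 * (p.1 : ℕ) + 1) p.2 q.2 else 0) :
    A22 - A21 * A11⁻¹ * A12 = fun p q =>
      if p.1 = q.1 then
        (D (2 * (p.1 : ℕ) + 1)
          - E (2 * (p.1 : ℕ) + 1) * (D (2 * (p.1 : ℕ)))⁻¹ * F (2 * (p.1 : ℕ))
          - F (2 * (p.1 : ℕ) + 1) * (D (2 * (p.1 : ℕ) + 2))⁻¹ * E (2 * (p.1 : ℕ) + 2)) p.2 q.2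
      else if (p.1 : ℕ) = (q.1 : ℕ) + 1 then
        (-(E (2 * (p.1 : ℕ) + 1) * (D (2 * (p.1 : ℕ)))⁻¹ * E (2 * (p.1 : ℕ)))) p.2 q.2
      else if (q.1 : ℕ) = (p.1 : ℕ) + 1 then
        (-(F (2 * (p.1 : ℕ) + 1) * (D (2 * (p.1 : ℕ) + 2))⁻¹ * F (2 * (p.1 : ℕ) + 2))) p.2 q.2
      else 0 :=
  schur_complement_of_even_blocks_is_block_tridiagonal_general m s D E F hEtop hD A11 A12 A21 A22
    hA11 hA12 hA21 hA22
end

section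
/- For a block tridiagonal matrix in which every diagonal block is strictly diagonally dominant by rows with dominance factor exceeding the sum of the row sums of the adjacent off-diagonal blocks (i.e., the full matrix is strictly diagonally dominant by rows), the even-indexed diagonal blocks are invertible and the Schur complement produced by one step of cyclic reduction is again strictly diagonally dominant by rows. -/
/-!
Reordering the block rows and columns red/black (even indices first) turns `A` into
`fromBlocks A11 A12 A21 A22`, so everything follows from the fact that Schur complements of
strictly diagonally dominant matrices are strictly diagonally dominant. For that, let
`c := R i ᵥ* P⁻¹`, so that `c ᵥ* P = R i`. Comparing each entry of `c ᵥ* P` with its diagonal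
contribution and summing, the dominance margins of the rows of `P` (which are at least the row
sums of `|Q|`) give `∑ j, |(c ᵥ* Q) j| ≤ ∑ k, |R i k|`: the correction `R * P⁻¹ * Q` has row
sums at most those of `R`, and the dominance of row `i` of `[R T]` absorbs it.
-/

open Matrix Finset

def StrictlyRowDiagDominant {ι : Type*} [Fintype ι] [DecidableEq ι]
    (M : Matrix ι ι ℝ) : Prop :=
  ∀ i, ∑ j ∈ Finset.univ.erase i, |M i j| < |M i i|

section

variable {ι κ : Type*} [Fintype ι] [Fintype κ]

lemma two_mul_abs_le_sum_abs_add_abs_sum (f : ι → ℝ) (k : ι) :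
    2 * |f k| ≤ ∑ l, |f l| + |∑ l, f l| := by
  classical
  rw [← add_sum_erase univ f (mem_univ k), ← add_sum_erase univ (fun l => |f l|) (mem_univ k)]
  have hrest : |∑ l ∈ univ.erase k, f l| ≤ ∑ l ∈ univ.erase k, |f l| := abs_sum_le_sum_abs _ _
  have hk := abs_sub (f k + ∑ l ∈ univ.erase k, f l) (∑ l ∈ univ.erase k, f l)
  rw [add_sub_cancel_right] at hk
  linarith

lemma sum_abs_vecMul_le (c : ι → ℝ) (Q : Matrix ι κ ℝ) :
    ∑ j, |(c ᵥ* Q) j| ≤ ∑ k, |c k| * ∑ j, |Q k j| :=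
  calc ∑ j, |(c ᵥ* Q) j| ≤ ∑ j, ∑ k, |c k| * |Q k j| :=
        sum_le_sum fun j _ => (abs_sum_le_sum_abs _ _).trans_eq (by simp only [abs_mul])
    _ = ∑ k, |c k| * ∑ j, |Q k j| := by simp only [sum_comm (γ := κ), mul_sum]

lemma sum_abs_mul_le_sum_abs_vecMul (P : Matrix ι ι ℝ) (r : ι → ℝ)
    (hr : ∀ k, ∑ l, |P k l| + r k ≤ 2 * |P k k|) (c : ι → ℝ) :
    ∑ k, |c k| * r k ≤ ∑ k, |(c ᵥ* P) k| := by
  have hcol : ∀ k, 2 * (|c k| * |P k k|) ≤ ∑ l, |c l| * |P l k| + |(c ᵥ* P) k| := fun k => by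
    have := two_mul_abs_le_sum_abs_add_abs_sum (fun l => c l * P l k) k
    simp only [abs_mul] at this
    exact this
  calc ∑ k, |c k| * r k ≤ ∑ k, (2 * (|c k| * |P k k|) - ∑ l, |c k| * |P k l|) := by
        refine sum_le_sum fun k _ => ?_
        rw [← mul_sum]
        nlinarith [hr k, abs_nonneg (c k)]
    _ = ∑ k, 2 * (|c k| * |P k k|) - ∑ k, ∑ l, |c l| * |P l k| := by
        rw [sum_sub_distrib, sum_comm (f := fun k l => |c l| * |P l k|)]
    _ ≤ ∑ k, |(c ᵥ* P) k| := by
        have := sum_le_sum fun k (_ : k ∈ univ) => hcol k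
        rw [sum_add_distrib] at this
        linarith

variable [DecidableEq ι] [DecidableEq κ]

theorem strictlyRowDiagDominant_iff (M : Matrix ι ι ℝ) :
    StrictlyRowDiagDominant M ↔ ∀ i, ∑ j, |M i j| < 2 * |M i i| := by
  refine forall_congr' fun i => ?_
  rw [sum_erase_eq_sub (mem_univ i)]
  constructor <;> intro h <;> linarith

theorem StrictlyRowDiagDominant.submatrix {M : Matrix ι ι ℝ} (hM : StrictlyRowDiagDominant M)
    {f : κ → ι} (hf : Function.Injective f) : StrictlyRowDiagDominant (M.submatrix f f) := by
  intro k
  calc ∑ l ∈ univ.erase k, |M (f k) (f l)|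
      = ∑ j ∈ (univ.erase k).map ⟨f, hf⟩, |M (f k) j| := by rw [sum_map]; rfl
    _ ≤ ∑ j ∈ univ.erase (f k), |M (f k) j| := by
      refine sum_le_sum_of_subset_of_nonneg ?_ fun _ _ _ => abs_nonneg _
      intro j
      simp only [mem_map, mem_erase, mem_univ, and_true, Function.Embedding.coeFn_mk]
      rintro ⟨l, hl, rfl⟩
      exact hf.ne hl
    _ < |M (f k) (f k)| := hM (f k)

theorem StrictlyRowDiagDominant.det_ne_zero {M : Matrix ι ι ℝ}
    (hM : StrictlyRowDiagDominant M) : M.det ≠ 0 :=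
  det_ne_zero_of_sum_row_lt_diag fun k => by simpa only [Real.norm_eq_abs] using hM k

theorem strictlyRowDiagDominant_sub (M N : Matrix ι ι ℝ)
    (h : ∀ i, ∑ j, |M i j| + ∑ j, |N i j| < 2 * |M i i|) :
    StrictlyRowDiagDominant (M - N) := by
  intro i
  have hoff : ∑ j ∈ univ.erase i, |(M - N) i j|
      ≤ ∑ j ∈ univ.erase i, |M i j| + ∑ j ∈ univ.erase i, |N i j| := by
    rw [← sum_add_distrib]
    exact sum_le_sum fun j _ => abs_sub _ _
  have hdiag : |M i i| - |N i i| ≤ |(M - N) i i| := abs_sub_abs_le_abs_sub _ _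
  simp only [sum_erase_eq_sub (mem_univ i)] at hoff ⊢
  linarith [h i]

theorem StrictlyRowDiagDominant.schur_complement {P : Matrix ι ι ℝ} {Q : Matrix ι κ ℝ}
    {R : Matrix κ ι ℝ} {T : Matrix κ κ ℝ} (h : StrictlyRowDiagDominant (fromBlocks P Q R T)) :
    StrictlyRowDiagDominant (T - R * P⁻¹ * Q) := by
  rw [strictlyRowDiagDominant_iff] at h
  have hP : ∀ k, ∑ l, |P k l| + ∑ j, |Q k j| < 2 * |P k k| := fun k => by
    simpa [Fintype.sum_sum_type] using h (Sum.inl k)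
  have hT : ∀ i, ∑ k, |R i k| + ∑ j, |T i j| < 2 * |T i i| := fun i => by
    simpa [Fintype.sum_sum_type] using h (Sum.inr i)
  have hPdet : P.det ≠ 0 := StrictlyRowDiagDominant.det_ne_zero <|
    (strictlyRowDiagDominant_iff P).2 fun k => by
      linarith [hP k, sum_nonneg fun j (_ : j ∈ univ) => abs_nonneg (Q k j)]
  refine strictlyRowDiagDominant_sub T _ fun i => ?_
  set c := R i ᵥ* P⁻¹
  have hrow : ∑ j, |(R * P⁻¹ * Q) i j| ≤ ∑ k, |R i k| :=
    calc ∑ j, |(R * P⁻¹ * Q) i j| = ∑ j, |(c ᵥ* Q) j| := rfl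
      _ ≤ ∑ k, |c k| * ∑ j, |Q k j| := sum_abs_vecMul_le c Q
      _ ≤ ∑ k, |(c ᵥ* P) k| := sum_abs_mul_le_sum_abs_vecMul P _ (fun k => (hP k).le) c
      _ = ∑ k, |R i k| := by
        rw [vecMul_vecMul, nonsing_inv_mul P (isUnit_iff_ne_zero.mpr hPdet), vecMul_one]
  linarith [hT i]

end

def redBlack (m s : ℕ) : (Fin m × Fin s) ⊕ (Fin m × Fin s) → Fin (2 * m) × Fin s :=
  Sum.elim (fun p => (⟨2 * p.1, by omega⟩, p.2)) (fun p => (⟨2 * p.1 + 1, by omega⟩, p.2))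

lemma redBlack_injective (m s : ℕ) : Function.Injective (redBlack m s) := by
  refine Function.Injective.sumElim ?_ ?_ ?_ <;>
    simp only [Function.Injective, Prod.forall, Prod.mk.injEq, Fin.ext_iff, ne_eq, not_and] <;>
    omega

theorem cyclic_reduction_preserves_diag_dominance_general
    (m s : ℕ) (D E F : ℕ → Matrix (Fin s) (Fin s) ℝ)
    (A : Matrix (Fin (2 * m) × Fin s) (Fin (2 * m) × Fin s) ℝ)
    (hA : A = fun p q =>
      if p.1 = q.1 then D (p.1 : ℕ) p.2 q.2
      else if (p.1 : ℕ) = (q.1 : ℕ) + 1 then E (p.1 : ℕ) p.2 q.2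
      else if (q.1 : ℕ) = (p.1 : ℕ) + 1 then F (p.1 : ℕ) p.2 q.2 else 0)
    (hSDD : StrictlyRowDiagDominant A)
    (A11 A12 A21 A22 : Matrix (Fin m × Fin s) (Fin m × Fin s) ℝ)
    (hA11 : A11 = fun p q => if p.1 = q.1 then D (2 * (p.1 : ℕ)) p.2 q.2 else 0)
    (hA12 : A12 = fun p q =>
      if p.1 = q.1 then F (2 * (p.1 : ℕ)) p.2 q.2
      else if (p.1 : ℕ) = (q.1 : ℕ) + 1 then E (2 * (p.1 : ℕ)) p.2 q.2 else 0)
    (hA21 : A21 = fun p q =>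
      if p.1 = q.1 then E (2 * (p.1 : ℕ) + 1) p.2 q.2
      else if (q.1 : ℕ) = (p.1 : ℕ) + 1 then F (2 * (p.1 : ℕ) + 1) p.2 q.2 else 0)
    (hA22 : A22 = fun p q => if p.1 = q.1 then D (2 * (p.1 : ℕ) + 1) p.2 q.2 else 0) :
    (∀ i : Fin m, IsUnit (D (2 * (i : ℕ)))) ∧
      StrictlyRowDiagDominant (A22 - A21 * A11⁻¹ * A12) := by
  have hblocks : A.submatrix (redBlack m s) (redBlack m s) = fromBlocks A11 A12 A21 A22 := by
    ext (⟨i, x⟩ | ⟨i, x⟩) (⟨j, y⟩ | ⟨j, y⟩) <;>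
      simp only [submatrix_apply, redBlack, Sum.elim_inl, Sum.elim_inr, fromBlocks_apply₁₁,
        fromBlocks_apply₁₂, fromBlocks_apply₂₁, fromBlocks_apply₂₂] <;>
      simp only [hA, hA11, hA12, hA21, hA22, Fin.ext_iff] <;>
      split_ifs <;> first | rfl | omega
  refine ⟨fun i => ?_, ?_⟩
  · have hD : D (2 * (i : ℕ)) = A.submatrix (fun y => redBlack m s (.inl (i, y)))
        (fun y => redBlack m s (.inl (i, y))) := by
      ext x y
      simp only [submatrix_apply, redBlack, Sum.elim_inl]
      simp [hA]
    rw [isUnit_iff_isUnit_det, isUnit_iff_ne_zero, hD]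
    exact (hSDD.submatrix ((redBlack_injective m s).comp
      (Sum.inl_injective.comp (Prod.mk_right_injective i)))).det_ne_zero
  · exact (hblocks ▸ hSDD.submatrix (redBlack_injective m s)).schur_complement

/-- For a strictly row diagonally dominant block tridiagonal matrix, the
even-indexed diagonal blocks are invertible and the Schur complement produced
by one step of cyclic reduction is again strictly row diagonally dominant. -/
theorem cyclic_reduction_preserves_diag_dominance
    (m s : ℕ) (D E F : ℕ → Matrix (Fin s) (Fin s) ℝ)
    (hE0 : E 0 = 0) (hEtop : ∀ j, 2 * m ≤ j → E j = 0)
    (hFtop : ∀ j, 2 * m - 1 ≤ j → F j = 0)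
    (A : Matrix (Fin (2 * m) × Fin s) (Fin (2 * m) × Fin s) ℝ)
    (hA : A = fun p q =>
      if p.1 = q.1 then D (p.1 : ℕ) p.2 q.2
      else if (p.1 : ℕ) = (q.1 : ℕ) + 1 then E (p.1 : ℕ) p.2 q.2
      else if (q.1 : ℕ) = (p.1 : ℕ) + 1 then F (p.1 : ℕ) p.2 q.2 else 0)
    (hSDD : StrictlyRowDiagDominant A)
    (A11 A12 A21 A22 : Matrix (Fin m × Fin s) (Fin m × Fin s) ℝ)
    (hA11 : A11 = fun p q => if p.1 = q.1 then D (2 * (p.1 : ℕ)) p.2 q.2 else 0)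
    (hA12 : A12 = fun p q =>
      if p.1 = q.1 then F (2 * (p.1 : ℕ)) p.2 q.2
      else if (p.1 : ℕ) = (q.1 : ℕ) + 1 then E (2 * (p.1 : ℕ)) p.2 q.2 else 0)
    (hA21 : A21 = fun p q =>
      if p.1 = q.1 then E (2 * (p.1 : ℕ) + 1) p.2 q.2
      else if (q.1 : ℕ) = (p.1 : ℕ) + 1 then F (2 * (p.1 : ℕ) + 1) p.2 q.2 else 0)
    (hA22 : A22 = fun p q => if p.1 = q.1 then D (2 * (p.1 : ℕ) + 1) p.2 q.2 else 0) :
    (∀ i : Fin m, IsUnit (D (2 * (i : ℕ)))) ∧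
      StrictlyRowDiagDominant (A22 - A21 * A11⁻¹ * A12) :=
  cyclic_reduction_preserves_diag_dominance_general m s D E F A hA hSDD A11 A12 A21 A22 hA11 hA12
    hA21 hA22
end

section
/- The Schur complement of any principal submatrix of a strictly row diagonally dominant matrix is strictly row diagonally dominant (in particular, all leading principal submatrices of such a matrix are invertible). -/
open Matrix

/-- The Schur complement of a principal submatrix of a strictly row diagonally
dominant matrix is again strictly row diagonally dominant; in particular the
principal submatrix itself is invertible. -/
theorem schur_complement_of_strictly_diag_dominant
    (n m : ℕ) (M : Matrix (Fin n ⊕ Fin m) (Fin n ⊕ Fin m) ℝ)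
    (hM : StrictlyRowDiagDominant M) :
    IsUnit M.toBlocks₁₁ ∧
      StrictlyRowDiagDominant
        (M.toBlocks₂₂ - M.toBlocks₂₁ * M.toBlocks₁₁⁻¹ * M.toBlocks₁₂) := by
  classical
  set A := M.toBlocks₁₁ with hAdef
  set B := M.toBlocks₁₂ with hBdef
  set C := M.toBlocks₂₁ with hCdef
  set D := M.toBlocks₂₂ with hDdef
  have hA : ∀ k l, A k l = M (Sum.inl k) (Sum.inl l) := fun _ _ => rfl
  have hB : ∀ k j, B k j = M (Sum.inl k) (Sum.inr j) := fun _ _ => rfl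
  have hC : ∀ i k, C i k = M (Sum.inr i) (Sum.inl k) := fun _ _ => rfl
  have hD : ∀ i j, D i j = M (Sum.inr i) (Sum.inr j) := fun _ _ => rfl
  -- Row dominance for the first block rows
  have hArow : ∀ k : Fin n,
      (∑ l ∈ Finset.univ.erase k, |A k l|) + ∑ j, |B k j| < |A k k| := by
    intro k
    have h := hM (Sum.inl k)
    rw [Finset.sum_erase_eq_sub (Finset.mem_univ _), Fintype.sum_sum_type] at h
    simp only [← hA, ← hB] at h
    rw [Finset.sum_erase_eq_sub (Finset.mem_univ _)]
    linarith
  -- Row dominance for the second block rows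
  have hDrow : ∀ i : Fin m,
      (∑ k, |C i k|) + (∑ j ∈ Finset.univ.erase i, |D i j|) < |D i i| := by
    intro i
    have h := hM (Sum.inr i)
    rw [Finset.sum_erase_eq_sub (Finset.mem_univ _), Fintype.sum_sum_type] at h
    simp only [← hC, ← hD] at h
    rw [Finset.sum_erase_eq_sub (Finset.mem_univ _)]
    linarith
  -- A is invertible
  have hdet : A.det ≠ 0 := by
    apply det_ne_zero_of_sum_row_lt_diag
    intro k
    have h1 := hArow k
    have h2 : (0:ℝ) ≤ ∑ j, |B k j| := Finset.sum_nonneg fun _ _ => abs_nonneg _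
    simp only [Real.norm_eq_abs]
    linarith
  have hAdetu : IsUnit A.det := isUnit_iff_ne_zero.mpr hdet
  have hAunit : IsUnit A := (Matrix.isUnit_iff_isUnit_det A).mpr hAdetu
  refine ⟨hAunit, ?_⟩
  intro i
  set y : Fin n → ℝ := fun k => (C * A⁻¹) i k with hy
  have hyA : ∀ k, ∑ l, y l * A l k = C i k := by
    intro k
    have h1 : C * A⁻¹ * A = C := Matrix.nonsing_inv_mul_cancel_right A C hAdetu
    have h2 := congrFun (congrFun h1 i) k
    rw [Matrix.mul_apply] at h2
    exact h2
  have hS : ∀ j, (D - C * A⁻¹ * B) i j = D i j - ∑ k, y k * B k j := by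
    intro j
    rw [Matrix.sub_apply, Matrix.mul_apply]
  -- the key estimate
  have step1 : ∑ k, |y k| * (∑ j, |B k j|)
      ≤ ∑ k, |y k| * (|A k k| - ∑ l ∈ Finset.univ.erase k, |A k l|) :=
    Finset.sum_le_sum fun k _ =>
      mul_le_mul_of_nonneg_left (by linarith [hArow k]) (abs_nonneg _)
  have swap : ∑ k, ∑ l ∈ Finset.univ.erase k, |y k| * |A k l|
      = ∑ k, ∑ l ∈ Finset.univ.erase k, |y l| * |A l k| := by
    have h1 : ∀ f : Fin n → Fin n → ℝ,
        ∑ k, ∑ l ∈ Finset.univ.erase k, f k l = (∑ k, ∑ l, f k l) - ∑ k, f k k := by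
      intro f
      rw [← Finset.sum_sub_distrib]
      exact Finset.sum_congr rfl fun k _ => Finset.sum_erase_eq_sub (Finset.mem_univ _)
    rw [h1, h1]
    have h2 : (∑ k, ∑ l, |y k| * |A k l|) = ∑ k, ∑ l, |y l| * |A l k| :=
      Finset.sum_comm
    rw [h2]
  have per : ∀ k, |y k| * |A k k| - ∑ l ∈ Finset.univ.erase k, |y l| * |A l k|
      ≤ |C i k| := by
    intro k
    rw [← hyA k]
    have hsplit : ∑ l, y l * A l k
        = y k * A k k + ∑ l ∈ Finset.univ.erase k, y l * A l k := by
      rw [add_comm]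
      exact (Finset.sum_erase_add Finset.univ _ (Finset.mem_univ k)).symm
    have h1 : |∑ l ∈ Finset.univ.erase k, y l * A l k|
        ≤ ∑ l ∈ Finset.univ.erase k, |y l| * |A l k| := by
      simpa [abs_mul] using
        Finset.abs_sum_le_sum_abs (fun l => y l * A l k) (Finset.univ.erase k)
    have h2 : |y k * A k k| - |∑ l ∈ Finset.univ.erase k, y l * A l k|
        ≤ |y k * A k k + ∑ l ∈ Finset.univ.erase k, y l * A l k| := by
      have := abs_sub_abs_le_abs_sub (y k * A k k)
        (-(∑ l ∈ Finset.univ.erase k, y l * A l k))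
      rwa [abs_neg, sub_neg_eq_add] at this
    rw [hsplit]
    rw [abs_mul] at h2
    linarith
  have key : ∑ k, |y k| * (∑ j, |B k j|) ≤ ∑ k, |C i k| := by
    refine step1.trans ?_
    calc ∑ k, |y k| * (|A k k| - ∑ l ∈ Finset.univ.erase k, |A k l|)
        = ∑ k, (|y k| * |A k k| - ∑ l ∈ Finset.univ.erase k, |y k| * |A k l|) := by
          refine Finset.sum_congr rfl fun k _ => ?_
          rw [mul_sub, Finset.mul_sum]
      _ = ∑ k, (|y k| * |A k k| - ∑ l ∈ Finset.univ.erase k, |y l| * |A l k|) := by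
          rw [Finset.sum_sub_distrib, Finset.sum_sub_distrib, swap]
      _ ≤ ∑ k, |C i k| := Finset.sum_le_sum fun k _ => per k
  -- bound the diagonal entry from below
  have hSii : |D i i| - ∑ k, |y k| * |B k i| ≤ |(D - C * A⁻¹ * B) i i| := by
    rw [hS i]
    have h1 : |∑ k, y k * B k i| ≤ ∑ k, |y k| * |B k i| := by
      simpa [abs_mul] using
        Finset.abs_sum_le_sum_abs (fun k => y k * B k i) Finset.univ
    have h2 : |D i i| - |∑ k, y k * B k i| ≤ |D i i - ∑ k, y k * B k i| :=
      abs_sub_abs_le_abs_sub _ _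
    linarith
  -- bound the off-diagonal row sum from above
  have hL : ∑ j ∈ Finset.univ.erase i, |(D - C * A⁻¹ * B) i j|
      ≤ (∑ j ∈ Finset.univ.erase i, |D i j|)
        + ((∑ k, |y k| * ∑ j, |B k j|) - ∑ k, |y k| * |B k i|) := by
    have hterm : ∀ j, |(D - C * A⁻¹ * B) i j| ≤ |D i j| + ∑ k, |y k| * |B k j| := by
      intro j
      rw [hS j]
      have h1 : |∑ k, y k * B k j| ≤ ∑ k, |y k| * |B k j| := by
        simpa [abs_mul] using
          Finset.abs_sum_le_sum_abs (fun k => y k * B k j) Finset.univ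
      have h2 : |D i j - ∑ k, y k * B k j| ≤ |D i j| + |∑ k, y k * B k j| := by
        rw [sub_eq_add_neg]
        exact (abs_add_le _ _).trans (by rw [abs_neg])
      linarith
    have h3 : ∑ j ∈ Finset.univ.erase i, |(D - C * A⁻¹ * B) i j|
        ≤ ∑ j ∈ Finset.univ.erase i, (|D i j| + ∑ k, |y k| * |B k j|) :=
      Finset.sum_le_sum fun j _ => hterm j
    rw [Finset.sum_add_distrib] at h3
    refine h3.trans (le_of_eq ?_)
    congr 1
    calc ∑ j ∈ Finset.univ.erase i, ∑ k, |y k| * |B k j|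
        = ∑ k, ∑ j ∈ Finset.univ.erase i, |y k| * |B k j| := Finset.sum_comm
      _ = ∑ k, |y k| * ∑ j ∈ Finset.univ.erase i, |B k j| := by
          refine Finset.sum_congr rfl fun k _ => ?_
          rw [Finset.mul_sum]
      _ = ∑ k, |y k| * ((∑ j, |B k j|) - |B k i|) := by
          refine Finset.sum_congr rfl fun k _ => ?_
          rw [Finset.sum_erase_eq_sub (Finset.mem_univ _)]
      _ = (∑ k, |y k| * ∑ j, |B k j|) - ∑ k, |y k| * |B k i| := by
          rw [← Finset.sum_sub_distrib]
          exact Finset.sum_congr rfl fun k _ => mul_sub _ _ _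
  have hDr := hDrow i
  linarith
end

section
/- Conjugation of a block tridiagonal matrix by the red/black block permutation yields a 2×2 block structure in which the (1,1) block is block diagonal: if A is block tridiagonal with n = 2m block rows and P is the permutation matrix of the red/black block reordering, then in P A P^T the submatrix indexed by the first m block rows and first m block columns is block diagonal with blocks D_0, D_2, ..., D_{2m-2}. -/
open Matrix

/-
The matrix `P` is the permutation matrix of the block permutation
`(k, a) ↦ (σ⁻¹ k, a)`, so `P A Pᵀ` is `A` with rows and columns reindexed by `σ⁻¹`.
For `i < m` the red/black map sends the even block index `2 i` to `i`, so the top-left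
`m × m` block of `P A Pᵀ` is the restriction of `A` to even block rows and columns.
Two even block indices are never adjacent, so only the diagonal blocks `D (2 i)` survive.
-/

theorem Matrix.permMatrix_mul_mul_transpose_permMatrix {n R : Type*} [DecidableEq n] [Fintype n]
    [NonAssocSemiring R] (g : Equiv.Perm n) (A : Matrix n n R) :
    g.permMatrix R * A * (g.permMatrix R)ᵀ = A.submatrix g g := by
  rw [transpose_permMatrix, PEquiv.toMatrix_toPEquiv_mul, PEquiv.mul_toMatrix_toPEquiv]
  rfl

theorem Equiv.Perm.permMatrix_prodCongr_symm_refl {ι κ R : Type*} [DecidableEq ι] [DecidableEq κ]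
    [Zero R] [One R] (e : Equiv.Perm ι) :
    Equiv.Perm.permMatrix R (e.symm.prodCongr (Equiv.refl κ)) =
      fun p q => if p.1 = e q.1 ∧ p.2 = q.2 then 1 else 0 := by
  ext p q
  simp [Prod.ext_iff, Equiv.eq_symm_apply, eq_comm]

namespace RedBlack

def index (m i : ℕ) : ℕ := if i % 2 = 0 then i / 2 else m + (i - 1) / 2

theorem index_injOn (m : ℕ) : Set.InjOn (index m) (Set.Iio (2 * m)) := by
  intro i hi j hj hij
  simp only [Set.mem_Iio] at hi hj
  unfold index at hij
  split_ifs at hij <;> omega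

theorem injective_of_val_eq_index {m : ℕ} {σ : Fin (2 * m) → Fin (2 * m)}
    (hσ : ∀ i, (σ i : ℕ) = index m i) : Function.Injective σ := fun i j hij =>
  Fin.ext <| index_injOn m i.isLt j.isLt <| by rw [← hσ, ← hσ, hij]

end RedBlack

def blockTridiagonal {R : Type*} [Zero R] {n s : ℕ} (D E F : ℕ → Matrix (Fin s) (Fin s) R) :
    Matrix (Fin n × Fin s) (Fin n × Fin s) R := fun p q =>
  if p.1 = q.1 then D (p.1 : ℕ) p.2 q.2
  else if (p.1 : ℕ) = (q.1 : ℕ) + 1 then E (p.1 : ℕ) p.2 q.2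
  else if (q.1 : ℕ) = (p.1 : ℕ) + 1 then F (p.1 : ℕ) p.2 q.2 else 0

theorem blockTridiagonal_apply_of_mod_two_eq {R : Type*} [Zero R] {n s : ℕ}
    (D E F : ℕ → Matrix (Fin s) (Fin s) R) {u v : Fin n} (huv : (u : ℕ) % 2 = (v : ℕ) % 2)
    (a b : Fin s) :
    blockTridiagonal D E F (u, a) (v, b) = if u = v then D u a b else 0 := by
  dsimp only [blockTridiagonal]
  split_ifs <;> first | rfl | omega

/-- Conjugating a block tridiagonal matrix by the red/black block permutation
yields a 2×2 block structure in which the (1,1) block (first `m` block rows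
and columns) is block diagonal with blocks `D_0, D_2, …, D_{2m-2}`. -/
theorem red_black_conjugation_top_left_block_diagonal
    (m s : ℕ) (D E F : ℕ → Matrix (Fin s) (Fin s) ℝ)
    (A : Matrix (Fin (2 * m) × Fin s) (Fin (2 * m) × Fin s) ℝ)
    (hA : A = fun p q =>
      if p.1 = q.1 then D (p.1 : ℕ) p.2 q.2
      else if (p.1 : ℕ) = (q.1 : ℕ) + 1 then E (p.1 : ℕ) p.2 q.2
      else if (q.1 : ℕ) = (p.1 : ℕ) + 1 then F (p.1 : ℕ) p.2 q.2 else 0)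
    (σ : Fin (2 * m) → Fin (2 * m))
    (hσ : ∀ i, (σ i : ℕ) =
      if (i : ℕ) % 2 = 0 then (i : ℕ) / 2 else m + ((i : ℕ) - 1) / 2)
    (P : Matrix (Fin (2 * m) × Fin s) (Fin (2 * m) × Fin s) ℝ)
    (hP : P = fun p q => if p.1 = σ q.1 ∧ p.2 = q.2 then 1 else 0) :
    ∀ (i j : Fin (2 * m)), (i : ℕ) < m → (j : ℕ) < m → ∀ (a b : Fin s),
      (P * A * Pᵀ) (i, a) (j, b) = if i = j then D (2 * (i : ℕ)) a b else 0 := by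
  intro i j hi hj a b
  let e : Equiv.Perm (Fin (2 * m)) := .ofBijective σ <|
    Finite.injective_iff_bijective.mp (RedBlack.injective_of_val_eq_index hσ)
  have he_symm : ∀ (k : Fin (2 * m)) (hk : (k : ℕ) < m), e.symm k = ⟨2 * k, by omega⟩ := by
    intro k hk
    rw [Equiv.symm_apply_eq]
    exact Fin.ext (by simp [e, hσ])
  have hA' : A = blockTridiagonal D E F := hA
  rw [hP.trans (Equiv.Perm.permMatrix_prodCongr_symm_refl e).symm,
    permMatrix_mul_mul_transpose_permMatrix, submatrix_apply]
  simp only [Equiv.prodCongr_apply, Prod.map, Equiv.refl_apply, he_symm i hi, he_symm j hj, hA']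
  rw [blockTridiagonal_apply_of_mod_two_eq D E F (by simp)]
  simp [Fin.ext_iff]
end

section
/- A tridiagonal (scalar, n×n) matrix with nonzero even-indexed diagonal entries admits one scalar cyclic reduction step, and the resulting reduced matrix on odd indices is again tridiagonal with entries d'_j = d_j - e_j f_{j-1}/d_{j-1} - f_j e_{j+1}/d_{j+1}, e'_j = -e_j e_{j-1}/d_{j-1}, f'_j = -f_j f_{j+1}/d_{j+1} (boundary terms omitted), and the odd part of any solution of the original system solves the reduced system with right-hand side f'_j = b_j - e_j b_{j-1}/d_{j-1} - f_j b_{j+1}/d_{j+1}. -/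
/-! Subtracting `e (k+1) / d k` times row `k` and `f (k+1) / d (k+2)` times row `k+2` from row
`k+1` eliminates `x k` and `x (k+2)`. At the last odd row `f (k+1) = 0`, so row `k+2` is not needed. -/

theorem reduced_row_of_rows {K : Type*} [Field K] {d e f b x : ℕ → K} {k : ℕ} (hk : d k ≠ 0)
    (row_k : e k * x (k - 1) + d k * x k + f k * x (k + 1) = b k)
    (row_succ : e (k + 1) * x k + d (k + 1) * x (k + 1) + f (k + 1) * x (k + 2) = b (k + 1))
    (row_next : f (k + 1) = 0 ∨ d (k + 2) ≠ 0 ∧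
      e (k + 2) * x (k + 1) + d (k + 2) * x (k + 2) + f (k + 2) * x (k + 3) = b (k + 2)) :
    (-(e (k + 1) * e k / d k)) * x (k - 1) +
        (d (k + 1) - e (k + 1) * f k / d k - f (k + 1) * e (k + 2) / d (k + 2)) * x (k + 1) +
        (-(f (k + 1) * f (k + 2) / d (k + 2))) * x (k + 3) =
      b (k + 1) - e (k + 1) * b k / d k - f (k + 1) * b (k + 2) / d (k + 2) := by
  rcases row_next with hf | ⟨hk2, row_next⟩
  · rw [← row_k, ← row_succ, hf]
    field_simp
    ring
  · rw [← row_k, ← row_succ, ← row_next]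
    field_simp
    ring

theorem scalar_cyclic_reduction_step_general
    (m : ℕ) (d e f b x : ℕ → ℝ)
    (hFtop : ∀ j, 2 * m - 1 ≤ j → f j = 0)
    (hd : ∀ j, j < 2 * m → j % 2 = 0 → d j ≠ 0)
    (hsys : ∀ i, i < 2 * m → e i * x (i - 1) + d i * x i + f i * x (i + 1) = b i) :
    ∀ i, i < m →
      (-(e (2 * i + 1) * e (2 * i) / d (2 * i))) * x (2 * i - 1) +
        (d (2 * i + 1) - e (2 * i + 1) * f (2 * i) / d (2 * i)
          - f (2 * i + 1) * e (2 * i + 2) / d (2 * i + 2)) * x (2 * i + 1) +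
        (-(f (2 * i + 1) * f (2 * i + 2) / d (2 * i + 2))) * x (2 * i + 3) =
      b (2 * i + 1) - e (2 * i + 1) * b (2 * i) / d (2 * i)
        - f (2 * i + 1) * b (2 * i + 2) / d (2 * i + 2) := by
  intro i hi
  have row_succ := hsys (2 * i + 1) (by omega)
  rw [Nat.add_sub_cancel] at row_succ
  have row_next : f (2 * i + 1) = 0 ∨ d (2 * i + 2) ≠ 0 ∧
      e (2 * i + 2) * x (2 * i + 1) + d (2 * i + 2) * x (2 * i + 2) +
        f (2 * i + 2) * x (2 * i + 3) = b (2 * i + 2) := by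
    by_cases hlast : 2 * i + 2 < 2 * m
    · exact .inr ⟨hd _ hlast (by omega), hsys _ hlast⟩
    · exact .inl (hFtop _ (by omega))
  exact reduced_row_of_rows (hd _ (by omega) (by omega)) (hsys _ (by omega)) row_succ row_next

/-- Scalar cyclic reduction step for a tridiagonal system: if `x` solves the
tridiagonal system with diagonal `d`, subdiagonal `e`, superdiagonal `f` and
right-hand side `b` (entries outside the index range `0..2m-1` being zero),
and the even-indexed diagonal entries are nonzero, then the odd part of `x`
solves the reduced tridiagonal system with the cyclic reduction entries. -/
theorem scalar_cyclic_reduction_step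
    (m : ℕ) (d e f b x : ℕ → ℝ)
    (hE0 : e 0 = 0) (hEtop : ∀ j, 2 * m ≤ j → e j = 0)
    (hFtop : ∀ j, 2 * m - 1 ≤ j → f j = 0)
    (hd : ∀ j, j < 2 * m → j % 2 = 0 → d j ≠ 0)
    (hsys : ∀ i, i < 2 * m → e i * x (i - 1) + d i * x i + f i * x (i + 1) = b i) :
    ∀ i, i < m →
      (-(e (2 * i + 1) * e (2 * i) / d (2 * i))) * x (2 * i - 1) +
        (d (2 * i + 1) - e (2 * i + 1) * f (2 * i) / d (2 * i)
          - f (2 * i + 1) * e (2 * i + 2) / d (2 * i + 2)) * x (2 * i + 1) +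
        (-(f (2 * i + 1) * f (2 * i + 2) / d (2 * i + 2))) * x (2 * i + 3) =
      b (2 * i + 1) - e (2 * i + 1) * b (2 * i) / d (2 * i)
        - f (2 * i + 1) * b (2 * i + 2) / d (2 * i + 2) :=
  scalar_cyclic_reduction_step_general m d e f b x hFtop hd hsys
end

section
/- Determinant factorization through cyclic reduction: for a block tridiagonal matrix A with invertible even diagonal blocks, det(A) = (∏_{j even} det D_j) · det(S), where S is the Schur complement of the even blocks in the red/black permuted matrix P A P^T. -/
open Matrix

/-! Reorder the block rows and columns of `A` so that the even-indexed ("red") ones come first.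
Since `A` is block tridiagonal, the red-red block is block diagonal with the blocks `D (2 i)`, so
the Schur complement formula for the resulting 2×2 block matrix gives the factorization. -/

noncomputable def finSumFinEvenOddEquiv (m : ℕ) : Fin m ⊕ Fin m ≃ Fin (2 * m) :=
  Equiv.ofBijective
    (Sum.elim (fun i => ⟨2 * i, by omega⟩) (fun i => ⟨2 * i + 1, by omega⟩))
    ((Fintype.bijective_iff_injective_and_card _).mpr
      ⟨by rintro (a | a) (b | b) h <;> simp [Fin.ext_iff] at h ⊢ <;> omega,
        by simp [two_mul]⟩)

@[simp]
theorem finSumFinEvenOddEquiv_inl {m : ℕ} (i : Fin m) :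
    (finSumFinEvenOddEquiv m (Sum.inl i) : ℕ) = 2 * i := rfl

@[simp]
theorem finSumFinEvenOddEquiv_inr {m : ℕ} (i : Fin m) :
    (finSumFinEvenOddEquiv m (Sum.inr i) : ℕ) = 2 * i + 1 := rfl

noncomputable def redBlackEquiv (m : ℕ) (n : Type*) :
    (Fin m × n) ⊕ (Fin m × n) ≃ Fin (2 * m) × n :=
  (Equiv.sumProdDistrib (Fin m) (Fin m) n).symm.trans
    ((finSumFinEvenOddEquiv m).prodCongr (Equiv.refl n))

theorem submatrix_redBlackEquiv_blockTridiagonal {n α : Type*} [Zero α] (m : ℕ)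
    (D E F : ℕ → Matrix n n α) :
    (of fun p q : Fin (2 * m) × n =>
      if p.1 = q.1 then D (p.1 : ℕ) p.2 q.2
      else if (p.1 : ℕ) = (q.1 : ℕ) + 1 then E (p.1 : ℕ) p.2 q.2
      else if (q.1 : ℕ) = (p.1 : ℕ) + 1 then F (p.1 : ℕ) p.2 q.2 else 0).submatrix
        (redBlackEquiv m n) (redBlackEquiv m n) =
      fromBlocks
        (of fun p q => if p.1 = q.1 then D (2 * (p.1 : ℕ)) p.2 q.2 else 0)
        (of fun p q =>
          if p.1 = q.1 then F (2 * (p.1 : ℕ)) p.2 q.2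
          else if (p.1 : ℕ) = (q.1 : ℕ) + 1 then E (2 * (p.1 : ℕ)) p.2 q.2 else 0)
        (of fun p q =>
          if p.1 = q.1 then E (2 * (p.1 : ℕ) + 1) p.2 q.2
          else if (q.1 : ℕ) = (p.1 : ℕ) + 1 then F (2 * (p.1 : ℕ) + 1) p.2 q.2 else 0)
        (of fun p q => if p.1 = q.1 then D (2 * (p.1 : ℕ) + 1) p.2 q.2 else 0) := by
  ext (⟨i, x⟩ | ⟨i, x⟩) (⟨j, y⟩ | ⟨j, y⟩) <;>
    simp only [redBlackEquiv, submatrix_apply, Equiv.trans_apply,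
      Equiv.sumProdDistrib_symm_apply_left, Equiv.sumProdDistrib_symm_apply_right,
      Equiv.prodCongr_apply, Prod.map, Equiv.refl_apply,
      of_apply, fromBlocks_apply₁₁, fromBlocks_apply₁₂, fromBlocks_apply₂₁, fromBlocks_apply₂₂,
      Fin.ext_iff, finSumFinEvenOddEquiv_inl, finSumFinEvenOddEquiv_inr] <;>
    grind

theorem det_of_ite_fst_eq {o n R : Type*} [Fintype o] [DecidableEq o] [Fintype n] [DecidableEq n]
    [CommRing R] (B : o → Matrix n n R) :
    (of fun p q : o × n => if p.1 = q.1 then B p.1 p.2 q.2 else 0).det = ∏ k, (B k).det := by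
  have : (of fun p q : o × n => if p.1 = q.1 then B p.1 p.2 q.2 else 0) =
      (blockDiagonal B).submatrix (Equiv.prodComm o n) (Equiv.prodComm o n) := by
    ext ⟨i, x⟩ ⟨j, y⟩
    simp [blockDiagonal_apply]
  rw [this, det_submatrix_equiv_self, det_blockDiagonal]

theorem det_factorization_cyclic_reduction_general
    (m s : ℕ) (D E F : ℕ → Matrix (Fin s) (Fin s) ℝ)
    (hD : ∀ i : Fin m, IsUnit (D (2 * (i : ℕ))))
    (A : Matrix (Fin (2 * m) × Fin s) (Fin (2 * m) × Fin s) ℝ)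
    (hA : A = fun p q =>
      if p.1 = q.1 then D (p.1 : ℕ) p.2 q.2
      else if (p.1 : ℕ) = (q.1 : ℕ) + 1 then E (p.1 : ℕ) p.2 q.2
      else if (q.1 : ℕ) = (p.1 : ℕ) + 1 then F (p.1 : ℕ) p.2 q.2 else 0)
    (A11 A12 A21 A22 : Matrix (Fin m × Fin s) (Fin m × Fin s) ℝ)
    (hA11 : A11 = fun p q => if p.1 = q.1 then D (2 * (p.1 : ℕ)) p.2 q.2 else 0)
    (hA12 : A12 = fun p q =>
      if p.1 = q.1 then F (2 * (p.1 : ℕ)) p.2 q.2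
      else if (p.1 : ℕ) = (q.1 : ℕ) + 1 then E (2 * (p.1 : ℕ)) p.2 q.2 else 0)
    (hA21 : A21 = fun p q =>
      if p.1 = q.1 then E (2 * (p.1 : ℕ) + 1) p.2 q.2
      else if (q.1 : ℕ) = (p.1 : ℕ) + 1 then F (2 * (p.1 : ℕ) + 1) p.2 q.2 else 0)
    (hA22 : A22 = fun p q => if p.1 = q.1 then D (2 * (p.1 : ℕ) + 1) p.2 q.2 else 0) :
    A.det = (∏ i : Fin m, (D (2 * (i : ℕ))).det) *
      (A22 - A21 * A11⁻¹ * A12).det := by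
  have hreorder : A.submatrix (redBlackEquiv m _) (redBlackEquiv m _) =
      fromBlocks A11 A12 A21 A22 := by
    subst hA hA11 hA12 hA21 hA22
    exact submatrix_redBlackEquiv_blockTridiagonal m D E F
  have hA11det : A11.det = ∏ i : Fin m, (D (2 * (i : ℕ))).det := by
    subst hA11
    exact det_of_ite_fst_eq fun i : Fin m => D (2 * i)
  have : Invertible A11 := by
    refine invertibleOfIsUnitDet _ ?_
    rw [hA11det]
    exact IsUnit.prod_univ_iff.mpr fun i => (isUnit_iff_isUnit_det _).mp (hD i)
  rw [← det_submatrix_equiv_self (redBlackEquiv m _) A, hreorder, det_fromBlocks₁₁, hA11det,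
    invOf_eq_nonsing_inv]

/-- Determinant factorization through cyclic reduction: for a block
tridiagonal matrix `A` with invertible even-indexed diagonal blocks,
`det A = (∏_{j even} det D_j) · det S`, where `S` is the Schur complement of
the even blocks in the red/black permuted matrix. -/
theorem det_factorization_cyclic_reduction
    (m s : ℕ) (D E F : ℕ → Matrix (Fin s) (Fin s) ℝ)
    (hE0 : E 0 = 0) (hEtop : ∀ j, 2 * m ≤ j → E j = 0)
    (hFtop : ∀ j, 2 * m - 1 ≤ j → F j = 0)
    (hD : ∀ i : Fin m, IsUnit (D (2 * (i : ℕ))))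
    (A : Matrix (Fin (2 * m) × Fin s) (Fin (2 * m) × Fin s) ℝ)
    (hA : A = fun p q =>
      if p.1 = q.1 then D (p.1 : ℕ) p.2 q.2
      else if (p.1 : ℕ) = (q.1 : ℕ) + 1 then E (p.1 : ℕ) p.2 q.2
      else if (q.1 : ℕ) = (p.1 : ℕ) + 1 then F (p.1 : ℕ) p.2 q.2 else 0)
    (A11 A12 A21 A22 : Matrix (Fin m × Fin s) (Fin m × Fin s) ℝ)
    (hA11 : A11 = fun p q => if p.1 = q.1 then D (2 * (p.1 : ℕ)) p.2 q.2 else 0)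
    (hA12 : A12 = fun p q =>
      if p.1 = q.1 then F (2 * (p.1 : ℕ)) p.2 q.2
      else if (p.1 : ℕ) = (q.1 : ℕ) + 1 then E (2 * (p.1 : ℕ)) p.2 q.2 else 0)
    (hA21 : A21 = fun p q =>
      if p.1 = q.1 then E (2 * (p.1 : ℕ) + 1) p.2 q.2
      else if (q.1 : ℕ) = (p.1 : ℕ) + 1 then F (2 * (p.1 : ℕ) + 1) p.2 q.2 else 0)
    (hA22 : A22 = fun p q => if p.1 = q.1 then D (2 * (p.1 : ℕ) + 1) p.2 q.2 else 0) :
    A.det = (∏ i : Fin m, (D (2 * (i : ℕ))).det) *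
      (A22 - A21 * A11⁻¹ * A12).det :=
  det_factorization_cyclic_reduction_general m s D E F hD A hA A11 A12 A21 A22 hA11 hA12 hA21 hA22
end
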